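/- A subspace S of a Kreĭn space H is quasi-pseudo-regular (S is an operator range and S = R ⊕ S⁰ with R regular and S⁰ = S∩S^⊥ neutral) if and only if S is an operator range and S + S^⊥ is closed. -/

import Mathlib

open ContinuousLinearMap

noncomputable section

namespace KreinPaper

variable {H : Type*} [NormedAddCommGroup H] [InnerProductSpace ℂ H] [CompleteSpace H]

/-- The indefinite orthogonal companion of a subspace, with respect to the
indefinite inner product `[x, y] = ⟪J x, y⟫`. -/
def kOrth (J : H →L[ℂ] H) (S : Submodule ℂ H) : Submodule ℂ H where
  carrier := {y | ∀ x ∈ S, (inner ℂ (J x) y : ℂ) = 0}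
  add_mem' := by
    intro a b ha hb x hx
    simp only [Set.mem_setOf_eq] at ha hb ⊢
    rw [inner_add_right, ha x hx, hb x hx, add_zero]
  zero_mem' := by
    intro x _
    exact inner_zero_right _
  smul_mem' := by
    intro c a ha x hx
    simp only [Set.mem_setOf_eq] at ha ⊢
    rw [inner_smul_right, ha x hx, mul_zero]

/-- A regular subspace: closed, with `R ∩ R^⊥ = 0` and `R + R^⊥ = H`. -/
def IsRegular (J : H →L[ℂ] H) (R : Submodule ℂ H) : Prop :=
  IsClosed (R : Set H) ∧ R ⊓ kOrth J R = ⊥ ∧ R ⊔ kOrth J R = ⊤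

/-- A neutral subspace: the indefinite inner product vanishes on it. -/
def IsNeutral (J : H →L[ℂ] H) (N : Submodule ℂ H) : Prop :=
  ∀ n ∈ N, (inner ℂ (J n) n : ℂ) = 0

/-- Two subspaces are orthogonal in the indefinite inner product. -/
def AreKOrth (J : H →L[ℂ] H) (A B : Submodule ℂ H) : Prop :=
  ∀ a ∈ A, ∀ b ∈ B, (inner ℂ (J a) b : ℂ) = 0

/-- An operator range: the range of a bounded operator (equivalently, of a
bounded operator on `H` itself). -/
def IsOpRange (S : Submodule ℂ H) : Prop :=
  ∃ T : H →L[ℂ] H, LinearMap.range (T : H →ₗ[ℂ] H) = S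

/-- Quasi-pseudo-regular subspace: an operator range which is the orthogonal
sum of a regular subspace and a neutral subspace. -/
def IsQpr (J : H →L[ℂ] H) (S : Submodule ℂ H) : Prop :=
  IsOpRange S ∧ ∃ R N : Submodule ℂ H,
    IsRegular J R ∧ IsNeutral J N ∧ AreKOrth J R N ∧ S = R ⊔ N

/-- Pseudo-regular subspace: a closed subspace which is the orthogonal
sum of a regular subspace and a neutral subspace. -/
def IsPseudoRegular (J : H →L[ℂ] H) (S : Submodule ℂ H) : Prop :=
  IsClosed (S : Set H) ∧ ∃ R N : Submodule ℂ H,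
    IsRegular J R ∧ IsNeutral J N ∧ AreKOrth J R N ∧ S = R ⊔ N

/-- A fundamental symmetry: a selfadjoint involution. -/
def IsFundSym (J : H →L[ℂ] H) : Prop :=
  IsSelfAdjoint J ∧ J ∘L J = ContinuousLinearMap.id ℂ H

/-- The indefinite (Kreĭn space) adjoint `A* = J A† J`. -/
def kAdj (J : H →L[ℂ] H) (A : H →L[ℂ] H) : H →L[ℂ] H :=
  J ∘L (ContinuousLinearMap.adjoint A) ∘L J

/-!
Forward direction: if `S = R + N` with `R` regular and `N` neutral and orthogonal to `R`, then
`N ⊆ S^⊥ ⊆ R^⊥`, so `S + S^⊥ = R + S^⊥`, which is the preimage of the closed `S^⊥` under the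
bounded projection onto `R^⊥` along `R`.

Backward direction: let `M` be the closure of `S`, `M⁰ = M ∩ M^⊥` its isotropic part and
`R₀ = M ⊖ M⁰`. Since `M^⊥ = S^⊥` and `M + M^⊥ = S + S^⊥` is closed, `R₀` is regular. By the open
mapping theorem, `(x, w) ↦ T x + w` onto the Banach space `S + S^⊥` has a bounded right inverse,
which yields a bounded `Φ` with values in `S = ran T` and `Φ r - r ∈ M⁰` for `r ∈ R₀`. As `M⁰` is
orthogonal to all of `M`, `Φ` preserves the indefinite inner product on `R₀`, so `R = Φ R₀ ⊆ S`
is again regular, and `S = R + (S ∩ S^⊥)`.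
-/
section KOrth

variable {E : Type*} [NormedAddCommGroup E] [InnerProductSpace ℂ E] {J : E →L[ℂ] E}
  {R N S T : Submodule ℂ E}

theorem kOrth_eq_orthogonal_map (J : E →L[ℂ] E) (S : Submodule ℂ E) :
    kOrth J S = (S.map (J : E →ₗ[ℂ] E))ᗮ := by
  ext y
  simp [kOrth, Submodule.mem_orthogonal]

theorem isClosed_kOrth (J : E →L[ℂ] E) (S : Submodule ℂ E) : IsClosed (kOrth J S : Set E) := by
  rw [kOrth_eq_orthogonal_map]
  exact Submodule.isClosed_orthogonal _

theorem kOrth_anti (h : S ≤ T) : kOrth J T ≤ kOrth J S :=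
  fun _ hy x hx => hy x (h hx)

theorem kOrth_topologicalClosure (J : E →L[ℂ] E) (S : Submodule ℂ E) :
    kOrth J S.topologicalClosure = kOrth J S := by
  refine le_antisymm (kOrth_anti S.le_topologicalClosure) ?_
  rw [kOrth_eq_orthogonal_map, kOrth_eq_orthogonal_map, ← Submodule.orthogonal_closure]
  exact Submodule.orthogonal_le (S.topologicalClosure_map J)

theorem kOrth_sup (J : E →L[ℂ] E) (S T : Submodule ℂ E) :
    kOrth J (S ⊔ T) = kOrth J S ⊓ kOrth J T := by
  simp only [kOrth_eq_orthogonal_map, Submodule.map_sup, Submodule.inf_orthogonal]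

theorem topologicalClosure_sup_kOrth_eq
    (hS : IsClosed ((S ⊔ kOrth J S : Submodule ℂ E) : Set E)) :
    S.topologicalClosure ⊔ kOrth J S.topologicalClosure = S ⊔ kOrth J S := by
  rw [kOrth_topologicalClosure]
  exact le_antisymm (sup_le (S.topologicalClosure_minimal le_sup_left hS) le_sup_right)
    (sup_le_sup_right S.le_topologicalClosure _)

theorem eq_sup_inf_of_forall_exists_sub_mem (hR : R ≤ S) (h : ∀ s ∈ S, ∃ r ∈ R, s - r ∈ T) :
    S = R ⊔ S ⊓ T := by
  refine le_antisymm (fun s hs => ?_) (sup_le hR inf_le_left)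
  obtain ⟨r, hr, hsr⟩ := h s hs
  exact Submodule.mem_sup.2 ⟨r, hr, s - r, ⟨S.sub_mem hs (hR hr), hsr⟩, add_sub_cancel _ _⟩

theorem IsNeutral.inner_eq_zero (hN : IsNeutral J N) {x y : E} (hx : x ∈ N) (hy : y ∈ N) :
    inner ℂ (J x) y = 0 := by
  have h := inner_map_polarization' (J : E →ₗ[ℂ] E) x y
  simp only [ContinuousLinearMap.coe_coe] at h
  rw [h, hN _ (N.add_mem hx hy), hN _ (N.sub_mem hx hy), hN _ (N.add_mem hx (N.smul_mem _ hy)),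
    hN _ (N.sub_mem hx (N.smul_mem _ hy))]
  simp

theorem IsNeutral.le_kOrth_sup (hN : IsNeutral J N) (hRN : AreKOrth J R N) :
    N ≤ kOrth J (R ⊔ N) := by
  intro n hn x hx
  obtain ⟨r, hr, n', hn', rfl⟩ := Submodule.mem_sup.1 hx
  rw [map_add, inner_add_left, hRN r hr n hn, hN.inner_eq_zero hn' hn, add_zero]

end KOrth

theorem isClosed_sup_of_isTopCompl_of_le {R E : Type*} [Ring R] [TopologicalSpace E]
    [AddCommGroup E] [IsTopologicalAddGroup E] [Module R E] {p q W : Submodule R E}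
    (h : Submodule.IsTopCompl p q) (hWq : W ≤ q) (hW : IsClosed (W : Set E)) :
    IsClosed ((p ⊔ W : Submodule R E) : Set E) := by
  set Q := q.projectionL p h.symm
  suffices ((p ⊔ W : Submodule R E) : Set E) = Q ⁻¹' W from this ▸ hW.preimage Q.continuous
  ext x
  constructor
  · intro hx
    obtain ⟨a, ha, w, hw, rfl⟩ := Submodule.mem_sup.1 hx
    have hQa : Q a = 0 := (Submodule.projectionL_apply_eq_zero_iff h.symm).2 ha
    have hQw : Q w = w := Submodule.projectionL_apply_left h.symm ⟨w, hWq hw⟩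
    change Q (a + w) ∈ W
    rwa [map_add, hQa, hQw, zero_add]
  · intro hx
    have hpx : x - Q x ∈ p := by
      rw [← Submodule.projectionL_eq_self_sub_projectionL]
      exact Submodule.projectionL_apply_mem _ _
    exact Submodule.mem_sup.2 ⟨_, hpx, Q x, hx, sub_add_cancel x (Q x)⟩

theorem isClosed_sup_kOrth_of_isRegular_sup_isNeutral {E : Type*} [NormedAddCommGroup E]
    [InnerProductSpace ℂ E] [CompleteSpace E] {J : E →L[ℂ] E} {R N : Submodule ℂ E}
    (hR : IsRegular J R) (hN : IsNeutral J N) (hRN : AreKOrth J R N) :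
    IsClosed ((R ⊔ N ⊔ kOrth J (R ⊔ N) : Submodule ℂ E) : Set E) := by
  have hsup : R ⊔ N ⊔ kOrth J (R ⊔ N) = R ⊔ kOrth J (R ⊔ N) :=
    le_antisymm (sup_le (sup_le_sup_left (hN.le_kOrth_sup hRN) _) le_sup_right)
      (sup_le_sup_right le_sup_left _)
  obtain ⟨hRc, hRinf, hRsup⟩ := hR
  have hRtop : Submodule.IsTopCompl R (kOrth J R) :=
    Submodule.IsCompl.isTopCompl_of_isClosed ⟨disjoint_iff.2 hRinf, codisjoint_iff.2 hRsup⟩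
      hRc (isClosed_kOrth J R)
  rw [hsup]
  exact isClosed_sup_of_isTopCompl_of_le hRtop (kOrth_anti le_sup_left) (isClosed_kOrth _ _)

theorem hasRightInverse_of_range_eq_top {𝕜 E F : Type*} [RCLike 𝕜] [NormedAddCommGroup E]
    [InnerProductSpace 𝕜 E] [CompleteSpace E] [NormedAddCommGroup F] [NormedSpace 𝕜 F]
    [CompleteSpace F] (f : E →L[𝕜] F) (hf : f.range = ⊤) : f.HasRightInverse := by
  set K := f.kerᗮ
  have hker : (f ∘L K.subtypeL).ker = ⊥ := by
    rw [Submodule.eq_bot_iff]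
    rintro ⟨x, hxK⟩ hx
    exact Subtype.ext (Submodule.inner_right_of_mem_orthogonal hx hxK |> inner_self_eq_zero.1)
  have hrange : (f ∘L K.subtypeL).range = ⊤ := by
    have : CompleteSpace f.ker := f.isClosed_ker.completeSpace_coe
    refine Submodule.eq_top_iff'.2 fun y => ?_
    obtain ⟨x, rfl⟩ := LinearMap.range_eq_top.1 hf y
    obtain ⟨a, ha, k, hk, rfl⟩ := f.ker.exists_add_mem_mem_orthogonal x
    exact ⟨⟨k, hk⟩, by simp [show f a = 0 from ha]⟩
  let e := ContinuousLinearEquiv.ofBijective (f ∘L K.subtypeL) hker hrange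
  exact ⟨K.subtypeL ∘L (e.symm : F →L[𝕜] K), fun y => e.apply_symm_apply y⟩

theorem exists_selection_of_isClosed_sup {E : Type*} [NormedAddCommGroup E]
    [InnerProductSpace ℂ E] [CompleteSpace E] {S W : Submodule ℂ E} (hS : IsOpRange S)
    (hW : IsClosed (W : Set E)) (hSW : IsClosed ((S ⊔ W : Submodule ℂ E) : Set E)) :
    ∃ Φ : E →L[ℂ] E, (∀ x, Φ x ∈ S) ∧ ∀ v ∈ S ⊔ W, v - Φ v ∈ W := by
  obtain ⟨T, rfl⟩ := hS
  have : CompleteSpace W := hW.completeSpace_coe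
  have : CompleteSpace (T.range ⊔ W : Submodule ℂ E) := hSW.completeSpace_coe
  set e := WithLp.prodContinuousLinearEquiv 2 ℂ E W
  set C : WithLp 2 (E × W) →L[ℂ] E :=
    (T ∘L .fst ℂ E W + W.subtypeL ∘L .snd ℂ E W) ∘L (e : WithLp 2 (E × W) →L[ℂ] E × W)
  have hC : ∀ z, C z ∈ T.range ⊔ W := fun z =>
    Submodule.add_mem_sup (LinearMap.mem_range_self _ _) (e z).2.2
  have hsurj : (C.codRestrict _ hC).range = ⊤ := by
    refine Submodule.eq_top_iff'.2 fun ⟨v, hv⟩ => ?_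
    obtain ⟨_, ⟨x, rfl⟩, w, hw, rfl⟩ := Submodule.mem_sup.1 hv
    exact ⟨e.symm (x, ⟨w, hw⟩), Subtype.ext (by simp [C])⟩
  obtain ⟨g, hg⟩ := hasRightInverse_of_range_eq_top _ hsurj
  set P := (T.range ⊔ W).orthogonalProjectionOnto
  refine ⟨T ∘L .fst ℂ E W ∘L (e : WithLp 2 (E × W) →L[ℂ] E × W) ∘L g ∘L P,
    fun x => LinearMap.mem_range_self _ _, fun v hv => ?_⟩
  have hCg : C (g ⟨v, hv⟩) = v := congrArg Subtype.val (hg ⟨v, hv⟩)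
  have hPv : P v = ⟨v, hv⟩ := Submodule.orthogonalProjectionOnto_mem_subspace_eq_self ⟨v, hv⟩
  simp only [C, ContinuousLinearMap.comp_apply, add_apply, ContinuousLinearMap.coe_fst',
    ContinuousLinearMap.coe_snd', ContinuousLinearEquiv.coe_coe, Submodule.subtypeL_apply] at hCg
  simp only [ContinuousLinearMap.comp_apply, hPv, ContinuousLinearMap.coe_fst',
    ContinuousLinearEquiv.coe_coe]
  rw [← eq_sub_iff_add_eq'.2 hCg]
  exact (e (g ⟨v, hv⟩)).2.2

section FundSym

variable {E : Type*} [NormedAddCommGroup E] [InnerProductSpace ℂ E] [CompleteSpace E]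
  {J : E →L[ℂ] E} {M S T : Submodule ℂ E}

theorem IsFundSym.apply_apply (hJ : IsFundSym J) (x : E) : J (J x) = x :=
  congrArg (fun f : E →L[ℂ] E => f x) hJ.2

theorem IsFundSym.inner_map_left (hJ : IsFundSym J) (x y : E) :
    inner ℂ (J x) y = inner ℂ x (J y) :=
  hJ.1.isSymmetric x y

theorem IsFundSym.inner_map_map (hJ : IsFundSym J) (x y : E) :
    inner ℂ (J x) (J y) = inner ℂ x y := by
  rw [hJ.inner_map_left, hJ.apply_apply]

theorem IsFundSym.inner_map_eq_zero_comm (hJ : IsFundSym J) {x y : E} :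
    inner ℂ (J x) y = 0 ↔ inner ℂ (J y) x = 0 := by
  rw [hJ.inner_map_left, ← inner_conj_symm, map_eq_zero]

theorem IsFundSym.le_kOrth_comm (hJ : IsFundSym J) : S ≤ kOrth J T ↔ T ≤ kOrth J S :=
  ⟨fun h _ ht _ hs => hJ.inner_map_eq_zero_comm.1 (h hs _ ht),
    fun h _ hs _ ht => hJ.inner_map_eq_zero_comm.1 (h ht _ hs)⟩

theorem IsFundSym.map_mem_kOrth_of_mem_orthogonal (hJ : IsFundSym J) {z : E} (hz : z ∈ Mᗮ) :
    J z ∈ kOrth J M := fun m hm => by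
  rw [hJ.inner_map_map]
  exact Submodule.inner_right_of_mem_orthogonal hm hz

theorem IsFundSym.map_mem_of_mem_orthogonal_sup_kOrth (hJ : IsFundSym J)
    (hM : IsClosed (M : Set E)) {x : E} (hx : x ∈ (M ⊔ kOrth J M)ᗮ) :
    J x ∈ M ⊓ kOrth J M := by
  rw [← Submodule.inf_orthogonal] at hx
  obtain ⟨hxM, hxK⟩ := hx
  have : CompleteSpace M := hM.completeSpace_coe
  refine ⟨?_, hJ.map_mem_kOrth_of_mem_orthogonal hxM⟩
  rw [← M.orthogonal_orthogonal]
  intro z hz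
  rw [← hJ.inner_map_left]
  exact Submodule.inner_right_of_mem_orthogonal (hJ.map_mem_kOrth_of_mem_orthogonal hz) hxK

theorem IsFundSym.isRegular_orthogonal_inf (hJ : IsFundSym J) (hM : IsClosed (M : Set E))
    (hMK : IsClosed ((M ⊔ kOrth J M : Submodule ℂ E) : Set E)) :
    IsRegular J ((M ⊓ kOrth J M)ᗮ ⊓ M) := by
  set M₀ := M ⊓ kOrth J M
  set R₀ := M₀ᗮ ⊓ M
  have : CompleteSpace M₀ := (hM.inter (isClosed_kOrth J M)).completeSpace_coe
  have : CompleteSpace (M ⊔ kOrth J M : Submodule ℂ E) := hMK.completeSpace_coe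
  have hM_eq : M₀ ⊔ R₀ = M := Submodule.sup_orthogonal_inf_of_hasOrthogonalProjection inf_le_left
  have hM₀R₀ : M₀ ≤ kOrth J R₀ := inf_le_right.trans (kOrth_anti inf_le_right)
  refine ⟨M₀.isClosed_orthogonal.inter hM, ?_, ?_⟩
  · refine (Submodule.eq_bot_iff _).2 fun x ⟨hxR, hxK⟩ => ?_
    have hxM₀ : x ∈ M₀ := by
      refine ⟨hxR.2, ?_⟩
      rw [← hM_eq, kOrth_sup]
      exact ⟨(hJ.le_kOrth_comm.1 inf_le_right) hxR.2, hxK⟩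
    exact (Submodule.inf_orthogonal_eq_bot M₀).le ⟨hxM₀, hxR.1⟩
  · rw [eq_top_iff, ← Submodule.sup_orthogonal_of_hasOrthogonalProjection (K := M ⊔ kOrth J M)]
    refine sup_le (sup_le ?_ (kOrth_anti inf_le_right |>.trans le_sup_right)) ?_
    · rw [← hM_eq, sup_comm]
      exact sup_le_sup_left hM₀R₀ _
    · intro x hx
      have hJx : J x ∈ R₀ᗮ :=
        Submodule.orthogonal_le inf_le_left (M₀.le_orthogonal_orthogonal
          (hJ.map_mem_of_mem_orthogonal_sup_kOrth hM hx))
      rw [← hJ.apply_apply x]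
      exact Submodule.mem_sup_right (hJ.map_mem_kOrth_of_mem_orthogonal hJx)

theorem IsFundSym.inner_map_eq_of_sub_mem_kOrth (hJ : IsFundSym J) {x x' y y' : E}
    (hx : x ∈ M) (hy' : y' ∈ M) (hxx : x' - x ∈ kOrth J M) (hyy : y' - y ∈ kOrth J M) :
    inner ℂ (J x') y' = inner ℂ (J x) y := calc
  inner ℂ (J x') y' = inner ℂ (J x) y' + inner ℂ (J (x' - x)) y' := by
    rw [← inner_add_left, ← map_add, add_sub_cancel]
  _ = inner ℂ (J x) y + inner ℂ (J x) (y' - y) := by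
    rw [hJ.inner_map_eq_zero_comm.1 (hxx y' hy'), ← inner_add_right, add_sub_cancel, add_zero]
  _ = inner ℂ (J x) y := by rw [hyy x hx, add_zero]

theorem IsFundSym.isRegular_range (hJ : IsFundSym J) {R₀ : Submodule ℂ E} (hR₀ : IsRegular J R₀)
    (Φ : R₀ →L[ℂ] E) (hΦ : ∀ r r' : R₀, inner ℂ (J (Φ r)) (Φ r') = inner ℂ (J r) (r' : E))
    (hcl : IsClosed (Φ.range : Set E)) : IsRegular J Φ.range := by
  have : CompleteSpace R₀ := hR₀.1.completeSpace_coe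
  obtain ⟨-, hinf, hsup⟩ := hR₀
  refine ⟨hcl, (Submodule.eq_bot_iff _).2 ?_, Submodule.eq_top_iff'.2 fun x => ?_⟩
  · rintro _ ⟨⟨r, rfl⟩, hK⟩
    have hr : (r : E) ∈ R₀ ⊓ kOrth J R₀ :=
      ⟨r.2, fun r' hr' => hΦ ⟨r', hr'⟩ r ▸ hK _ ⟨_, rfl⟩⟩
    rw [hinf, Submodule.mem_bot, ZeroMemClass.coe_eq_zero] at hr
    simp [hr]
  · set t := Φ.adjoint (J x)
    obtain ⟨c, hc, w, hw, hcw⟩ :=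
      Submodule.mem_sup.1 (hsup ▸ Submodule.mem_top : J t ∈ R₀ ⊔ kOrth J R₀)
    refine Submodule.mem_sup.2 ⟨Φ ⟨c, hc⟩, ⟨_, rfl⟩, x - Φ ⟨c, hc⟩, ?_, add_sub_cancel _ _⟩
    rintro _ ⟨r, rfl⟩
    calc inner ℂ (J (Φ r)) (x - Φ ⟨c, hc⟩)
        = inner ℂ (r : E) t - inner ℂ (J r) c := by
          rw [inner_sub_right, hΦ, hJ.inner_map_left, ← ContinuousLinearMap.adjoint_inner_right,
            Submodule.coe_inner]
      _ = inner ℂ (J r) (J t) - inner ℂ (J r) c := by rw [hJ.inner_map_map]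
      _ = 0 := by rw [← hcw, inner_add_right, add_sub_cancel_left, hw r r.2]

end FundSym

theorem IsFundSym.isQpr_of_lift {E : Type*} [NormedAddCommGroup E] [InnerProductSpace ℂ E]
    [CompleteSpace E] {J : E →L[ℂ] E} (hJ : IsFundSym J) {S M : Submodule ℂ E}
    (hS : IsOpRange S) (hM : IsClosed (M : Set E)) (hSM : S ≤ M)
    (hR : IsRegular J ((M ⊓ kOrth J M)ᗮ ⊓ M)) (Φ : E →L[ℂ] E) (hΦS : ∀ x, Φ x ∈ S)
    (hΦ : ∀ r ∈ (M ⊓ kOrth J M)ᗮ ⊓ M, Φ r - r ∈ kOrth J M) : IsQpr J S := by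
  set M₀ := M ⊓ kOrth J M
  set R₀ := M₀ᗮ ⊓ M
  have : CompleteSpace R₀ := hR.1.completeSpace_coe
  have : CompleteSpace M₀ := (hM.inter (isClosed_kOrth J M)).completeSpace_coe
  have hΦM₀ : ∀ r ∈ R₀, Φ r - r ∈ M₀ := fun r hr => ⟨M.sub_mem (hSM (hΦS r)) hr.2, hΦ r hr⟩
  set Ψ := Φ ∘L R₀.subtypeL
  have hΨS : Ψ.range ≤ S := by rintro _ ⟨r, rfl⟩; exact hΦS r
  have hΨ : Ψ.HasLeftInverse := ⟨R₀.orthogonalProjectionOnto, fun r => by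
    have h0 := Submodule.orthogonalProjectionOnto_apply_of_mem_orthogonal (K := R₀)
      (Submodule.orthogonal_le inf_le_left (M₀.le_orthogonal_orthogonal (hΦM₀ r r.2)))
    simpa [Ψ, sub_eq_zero] using h0⟩
  refine ⟨hS, Ψ.range, S ⊓ kOrth J S, hJ.isRegular_range hR Ψ (fun r r' => ?_) ?_,
    fun n hn => hn.2 n hn.1, fun a ha b hb => hb.2 a (hΨS ha),
    eq_sup_inf_of_forall_exists_sub_mem hΨS fun s hs => ?_⟩
  · exact hJ.inner_map_eq_of_sub_mem_kOrth r.2.2 (hSM (hΦS r')) (hΦ r r.2) (hΦ r' r'.2)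
  · simpa [LinearMap.coe_range] using hΨ.isClosed_range
  · have hs' : s ∈ M₀ ⊔ R₀ := by
      rw [Submodule.sup_orthogonal_inf_of_hasOrthogonalProjection inf_le_left]
      exact hSM hs
    obtain ⟨n, hn, r, hr, rfl⟩ := Submodule.mem_sup.1 hs'
    refine ⟨Ψ ⟨r, hr⟩, ⟨_, rfl⟩, kOrth_anti hSM ?_⟩
    rw [show n + r - Ψ ⟨r, hr⟩ = n - (Φ r - r) by simp [Ψ]; abel]
    exact (M₀.sub_mem hn (hΦM₀ r hr)).2

/-- `S` is quasi-pseudo-regular if and only if `S` is an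
operator range and `S + S^⊥` is closed. -/
theorem qpr_iff_opRange_and_closed (J : H →L[ℂ] H) (hJ : IsFundSym J)
    (S : Submodule ℂ H) :
    IsQpr J S ↔
      IsOpRange S ∧ IsClosed ((S ⊔ kOrth J S : Submodule ℂ H) : Set H) := by
  constructor
  · rintro ⟨hS, R, N, hR, hN, hRN, rfl⟩
    exact ⟨hS, isClosed_sup_kOrth_of_isRegular_sup_isNeutral hR hN hRN⟩
  · rintro ⟨hS, hcl⟩
    have hMsup := topologicalClosure_sup_kOrth_eq hcl
    obtain ⟨Φ, hΦS, hΦ⟩ := exists_selection_of_isClosed_sup hS (isClosed_kOrth J S) hcl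
    refine hJ.isQpr_of_lift hS S.isClosed_topologicalClosure S.le_topologicalClosure
      (hJ.isRegular_orthogonal_inf S.isClosed_topologicalClosure (hMsup ▸ hcl)) Φ hΦS
      fun r hr => ?_
    rw [kOrth_topologicalClosure, ← neg_sub]
    exact neg_mem (hΦ r (hMsup ▸ Submodule.mem_sup_left hr.2))

end KreinPaper
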